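/- arXiv:1712.00794 — 2 statements merged into one kernel-verified Lean document; each statement's English description precedes it below -/
import Mathlib

section
/- With A^n = the dg algebra k[x,y]-bar with |x|=0, |y|=1, dy=xⁿ as above, the homology of A^n is isomorphic as a graded vector space to ⨁_{a=1}^{n−1} k·z_a concentrated in degree 0, where z_a is the class of x^a. -/
noncomputable section

/-- The underlying vector space of the dg algebra `Aⁿ = k̄[x,y]`, with basis indexed by
`Sum.inl a ↔ x^(a+1)` (degree 0) and `Sum.inr a ↔ x^a y` (degree 1). -/
abbrev A (k : Type*) [Field k] := (ℕ ⊕ ℕ) →₀ k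

/-- `X k a` represents the monomial `x^(a+1)`. -/
def X (k : Type*) [Field k] (a : ℕ) : A k := Finsupp.single (Sum.inl a) 1

/-- `Y k a` represents the monomial `x^a y`. -/
def Y (k : Type*) [Field k] (a : ℕ) : A k := Finsupp.single (Sum.inr a) 1

/-- Homological degree of the basis monomials. -/
def deg : ℕ ⊕ ℕ → ℕ
  | .inl _ => 0
  | .inr _ => 1

/-- Product of basis monomials of `Aⁿ`. -/
def muBasis (k : Type*) [Field k] : ℕ ⊕ ℕ → ℕ ⊕ ℕ → A k
  | .inl a, .inl b => X k (a + b + 1)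
  | .inl a, .inr b => Y k (a + b + 1)
  | .inr a, .inl b => Y k (a + b + 1)
  | .inr _, .inr _ => 0

/-- The (bilinear) multiplication of `Aⁿ`. -/
def mulA (k : Type*) [Field k] : A k →ₗ[k] A k →ₗ[k] A k :=
  Finsupp.lsum k fun i => LinearMap.toSpanSingleton k (A k →ₗ[k] A k)
    (Finsupp.lsum k fun j => LinearMap.toSpanSingleton k (A k) (muBasis k i j))

/-- Value of the differential on basis monomials: `d(x^(a+1)) = 0`, `d(x^a y) = x^(a+n)`. -/
def dBasis (k : Type*) [Field k] (n : ℕ) : ℕ ⊕ ℕ → A k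
  | .inl _ => 0
  | .inr a => X k (a + n - 1)

/-- The differential of `Aⁿ`. -/
def dA (k : Type*) [Field k] (n : ℕ) : A k →ₗ[k] A k :=
  Finsupp.lsum k fun i => LinearMap.toSpanSingleton k (A k) (dBasis k n i)

end

/-! The differential kills every `x^a` and sends `x^a y` to `x^(a+n)`, so the cycles are the
polynomials in `x` and the boundaries are the multiples of `x^n`. Reading off the coefficients
of `x, …, x^(n-1)` is therefore a surjection from the cycles whose kernel is exactly the
boundaries. -/

open Finsupp

section Differential

variable (k : Type*) [Field k] (n : ℕ)

theorem dA_single_inl (a : ℕ) (c : k) : dA k n (single (Sum.inl a) c) = 0 := by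
  simp [dA, dBasis]

theorem dA_single_inr (hn : 1 ≤ n) (a : ℕ) (c : k) :
    dA k n (single (Sum.inr a) c) = single (Sum.inl (a + (n - 1))) c := by
  simp [dA, dBasis, X, smul_single, Nat.add_sub_assoc hn]

theorem X_mem_ker_dA (a : ℕ) : X k a ∈ LinearMap.ker (dA k n) :=
  dA_single_inl k n a 1

variable {k n}

theorem dA_apply_inr (f : A k) (a : ℕ) : dA k n f (Sum.inr a) = 0 := by
  induction f using induction_linear with
  | zero => simp
  | add f g hf hg => simp [hf, hg]
  | single i c =>
    rcases i with b | b
    · simp [dA_single_inl]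
    · simp [dA, dBasis, X]

theorem dA_apply_inl_of_lt (f : A k) {b : ℕ} (hb : b < n - 1) : dA k n f (Sum.inl b) = 0 := by
  induction f using induction_linear with
  | zero => simp
  | add f g hf hg => simp [hf, hg]
  | single i c =>
    rcases i with a | a
    · simp [dA_single_inl]
    · simp [dA, dBasis, X, single_apply]
      omega

theorem dA_apply_inl_add (hn : 1 ≤ n) (f : A k) (a : ℕ) :
    dA k n f (Sum.inl (a + (n - 1))) = f (Sum.inr a) := by
  induction f using induction_linear with
  | zero => simp
  | add f g hf hg => simp [hf, hg]
  | single i c =>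
    rcases i with b | b
    · simp [dA_single_inl]
    · simp [dA_single_inr k n hn, single_apply]

theorem apply_inr_eq_zero_of_mem_ker (hn : 1 ≤ n) {f : A k} (hf : f ∈ LinearMap.ker (dA k n))
    (a : ℕ) : f (Sum.inr a) = 0 := by
  rw [← dA_apply_inl_add hn, LinearMap.mem_ker.mp hf, coe_zero, Pi.zero_apply]

/-- A cycle whose coefficients of `x, …, x^(n-1)` vanish is the boundary of the element
`∑ f(x^(a+n)) x^a y`. -/
theorem mem_range_dA_of_mem_ker (hn : 1 ≤ n) {f : A k} (hf : f ∈ LinearMap.ker (dA k n))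
    (hlow : ∀ b < n - 1, f (Sum.inl b) = 0) : f ∈ LinearMap.range (dA k n) := by
  let g : ℕ →₀ k := comapDomain (fun a => Sum.inl (a + (n - 1)))
    f (Sum.inl_injective.comp (add_left_injective (n - 1))).injOn
  refine ⟨mapDomain Sum.inr g, ?_⟩
  ext (b | a)
  · obtain hb | hb := lt_or_ge b (n - 1)
    · rw [dA_apply_inl_of_lt _ hb, hlow b hb]
    · obtain ⟨a, rfl⟩ := Nat.exists_eq_add_of_le' hb
      rw [dA_apply_inl_add hn, mapDomain_apply Sum.inr_injective]
      exact comapDomain_apply _ _ _ _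
  · rw [dA_apply_inr, apply_inr_eq_zero_of_mem_ker hn hf]

end Differential

section Homology

variable (k : Type*) [Field k] (n : ℕ)

/-- The coefficients of `x, …, x^(n-1)` in a cycle (`Sum.inl a` indexes `x^(a+1)`). -/
noncomputable def cycleCoeffs : LinearMap.ker (dA k n) →ₗ[k] Fin (n - 1) →₀ k :=
  lcomapDomain (fun a : Fin (n - 1) => Sum.inl (a : ℕ))
      (Sum.inl_injective.comp Fin.val_injective)
    ∘ₗ (LinearMap.ker (dA k n)).subtype

theorem cycleCoeffs_apply (f : LinearMap.ker (dA k n)) (a : Fin (n - 1)) :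
    cycleCoeffs k n f a = (f : A k) (Sum.inl a) :=
  rfl

theorem cycleCoeffs_X (a : Fin (n - 1)) :
    cycleCoeffs k n ⟨X k a, X_mem_ker_dA k n a⟩ = single a 1 := by
  ext b
  simp [cycleCoeffs_apply, X, single_apply, Fin.ext_iff]

theorem cycleCoeffs_surjective : Function.Surjective (cycleCoeffs k n) := by
  intro g
  have hg : mapDomain (fun a : Fin (n - 1) => Sum.inl (a : ℕ)) g ∈ LinearMap.ker (dA k n) := by
    rw [LinearMap.mem_ker, mapDomain, map_finsuppSum]
    exact Finset.sum_eq_zero fun a _ => dA_single_inl k n _ _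
  refine ⟨⟨_, hg⟩, ?_⟩
  ext a
  exact mapDomain_apply (Sum.inl_injective.comp Fin.val_injective) g a

theorem ker_cycleCoeffs (hn : 1 ≤ n) :
    LinearMap.ker (cycleCoeffs k n)
      = (LinearMap.range (dA k n)).comap (LinearMap.ker (dA k n)).subtype := by
  ext f
  simp only [LinearMap.mem_ker, Submodule.mem_comap, Submodule.coe_subtype]
  constructor
  · intro hf
    refine mem_range_dA_of_mem_ker hn f.2 fun b hb => ?_
    simpa [cycleCoeffs_apply] using DFunLike.congr_fun hf ⟨b, hb⟩
  · rintro ⟨g, hg⟩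
    ext a
    rw [cycleCoeffs_apply, ← hg, dA_apply_inl_of_lt g a.2, coe_zero, Pi.zero_apply]

end Homology

theorem stmt_3_general (k : Type) [Field k] (n : ℕ) (hn : 1 ≤ n) :
    ∃ hmem : ∀ a : Fin (n - 1), X k (a : ℕ) ∈ LinearMap.ker (dA k n),
      ∃ e : (@HasQuotient.Quotient ↥(LinearMap.ker (dA k n))
              (Submodule k ↥(LinearMap.ker (dA k n)))
              (Submodule.hasQuotient (R := k) (M := ↥(LinearMap.ker (dA k n))))
              ((LinearMap.range (dA k n)).comap (LinearMap.ker (dA k n)).subtype))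
            ≃ₗ[k] (Fin (n - 1) →₀ k),
        ∀ a : Fin (n - 1),
          e (Submodule.Quotient.mk ⟨X k (a : ℕ), hmem a⟩) = Finsupp.single a 1 := by
  refine ⟨fun a => X_mem_ker_dA k n a,
    (Submodule.quotEquivOfEq _ _ (ker_cycleCoeffs k n hn).symm).trans
      ((cycleCoeffs k n).quotKerEquivOfSurjective (cycleCoeffs_surjective k n)),
    fun a => ?_⟩
  exact cycleCoeffs_X k n a

/-- The homology of `Aⁿ` is isomorphic, as a graded vector space concentrated
in degree `0`, to `⨁_{a=1}^{n−1} k·z_a`, where `z_a` is the class of the degree-`0`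
cycle `x^a` (here `X k a = x^(a+1)`, so `a : Fin (n-1)` corresponds to `z_(a+1)`). -/
theorem stmt_3 (k : Type) [Field k] [CharZero k] (n : ℕ) (hn : 1 ≤ n) :
    ∃ hmem : ∀ a : Fin (n - 1), X k (a : ℕ) ∈ LinearMap.ker (dA k n),
      ∃ e : (@HasQuotient.Quotient ↥(LinearMap.ker (dA k n))
              (Submodule k ↥(LinearMap.ker (dA k n)))
              (Submodule.hasQuotient (R := k) (M := ↥(LinearMap.ker (dA k n))))
              ((LinearMap.range (dA k n)).comap (LinearMap.ker (dA k n)).subtype))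
            ≃ₗ[k] (Fin (n - 1) →₀ k),
        ∀ a : Fin (n - 1),
          e (Submodule.Quotient.mk ⟨X k (a : ℕ), hmem a⟩) = Finsupp.single a 1 :=
  stmt_3_general k n hn
end

section
/- With A^n, H^n, i, p, h as above: for any two basis elements u, v of i(H^n) ⊂ A^n, multiplying h(u·v) or p-applied products involving a factor from the image of h by any further element of A^n and then applying h or p yields 0. Concretely: h(x^a · x^b) = x^{a+b−n} y if a+b ≥ n and 0 otherwise, and for any c ≥ 1, p(x^c · x^{a+b−n} y) = 0 and h(x^c · x^{a+b−n} y) = 0. Hence all transferred A_∞-operations m_k on H^n for k ≥ 3 vanish, so A^n is formal. -/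
noncomputable section

/-- `iMap` sends `z_(a+1)` to `x^(a+1)`. -/
def iMap (k : Type*) [Field k] (n : ℕ) : (Fin (n - 1) →₀ k) →ₗ[k] A k :=
  Finsupp.lsum k fun a => LinearMap.toSpanSingleton k (A k) (X k (a : ℕ))

/-- Value of `p` on basis monomials: `p(x^a) = z_a` for `a < n`, and `0` otherwise. -/
def pBasis (k : Type*) [Field k] (n : ℕ) : ℕ ⊕ ℕ → (Fin (n - 1) →₀ k)
  | .inl a => if h : a < n - 1 then Finsupp.single ⟨a, h⟩ 1 else 0
  | .inr _ => 0

def pMap (k : Type*) [Field k] (n : ℕ) : A k →ₗ[k] (Fin (n - 1) →₀ k) :=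
  Finsupp.lsum k fun i => LinearMap.toSpanSingleton k (Fin (n - 1) →₀ k) (pBasis k n i)

/-- Value of the homotopy `h` on basis monomials: `h(x^a) = x^(a−n) y` for `a ≥ n`,
`0` otherwise. -/
def hBasis (k : Type*) [Field k] (n : ℕ) : ℕ ⊕ ℕ → A k
  | .inl a => if n ≤ a + 1 then Y k (a + 1 - n) else 0
  | .inr _ => 0

def hMap (k : Type*) [Field k] (n : ℕ) : A k →ₗ[k] A k :=
  Finsupp.lsum k fun i => LinearMap.toSpanSingleton k (A k) (hBasis k n i)

end

noncomputable section

/-! The homotopy `h` takes values in the degree-one part of `Aⁿ`, spanned by the `x^a y`. Since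
`y² = 0`, this part is an ideal, and both `p` and `h` vanish on it. Hence `p(u · h w) = 0` and
`h(u · h w) = 0`: every tree with an internal edge contributes nothing to the transferred
operations. -/

theorem Finsupp.lsum_toSpanSingleton_mem {α R M : Type*} [CommSemiring R] [AddCommMonoid M]
    [Module R M] {g : α → M} {s : Set α} {v : α →₀ R} (hv : v ∈ Finsupp.supported R R s)
    {P : Submodule R M} (hg : ∀ i ∈ s, g i ∈ P) :
    Finsupp.lsum R (fun i => LinearMap.toSpanSingleton R M (g i)) v ∈ P := by
  rw [Finsupp.lsum_apply]
  exact Submodule.finsuppSum_mem _ _ _ _ fun i hi =>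
    P.smul_mem _ (hg i (hv (Finsupp.mem_support_iff.mpr hi)))

def degreeOne (k : Type*) [Field k] : Submodule k (A k) :=
  Finsupp.supported k k {i | deg i = 1}

theorem Y_mem_degreeOne (k : Type*) [Field k] (a : ℕ) : Y k a ∈ degreeOne k :=
  Finsupp.single_mem_supported k _ rfl

theorem muBasis_mem_degreeOne (k : Type*) [Field k] (i : ℕ ⊕ ℕ) {j : ℕ ⊕ ℕ}
    (hj : deg j = 1) :
    muBasis k i j ∈ degreeOne k := by
  rcases i with a | a <;> rcases j with b | b
  · simp [deg] at hj
  · exact Y_mem_degreeOne k _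
  · simp [deg] at hj
  · exact zero_mem _

theorem mulA_mem_degreeOne (k : Type*) [Field k] (u : A k) {v : A k} (hv : v ∈ degreeOne k) :
    mulA k u v ∈ degreeOne k := by
  induction u using Finsupp.induction_linear with
  | zero => simp
  | add f g hf hg => simpa using add_mem hf hg
  | single i c =>
    simp only [mulA, Finsupp.lsum_single, LinearMap.toSpanSingleton_apply, LinearMap.smul_apply]
    exact Submodule.smul_mem _ _
      (Finsupp.lsum_toSpanSingleton_mem hv fun _ hj => muBasis_mem_degreeOne k i hj)

theorem hMap_mem_degreeOne (k : Type*) [Field k] (n : ℕ) (w : A k) :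
    hMap k n w ∈ degreeOne k := by
  refine Finsupp.lsum_toSpanSingleton_mem (s := Set.univ) (by simp) fun i _ => ?_
  rcases i with a | a
  · by_cases h : n ≤ a + 1 <;> simp [hBasis, h, Y_mem_degreeOne, zero_mem]
  · exact zero_mem _

theorem hMap_eq_zero_of_mem_degreeOne (k : Type*) [Field k] (n : ℕ) {v : A k}
    (hv : v ∈ degreeOne k) : hMap k n v = 0 := by
  rw [← Submodule.mem_bot k]
  refine Finsupp.lsum_toSpanSingleton_mem hv fun i hi => ?_
  rcases i with a | a
  · simp [deg] at hi
  · exact zero_mem _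

theorem pMap_eq_zero_of_mem_degreeOne (k : Type*) [Field k] (n : ℕ) {v : A k}
    (hv : v ∈ degreeOne k) : pMap k n v = 0 := by
  rw [← Submodule.mem_bot k]
  refine Finsupp.lsum_toSpanSingleton_mem hv fun i hi => ?_
  rcases i with a | a
  · simp [deg] at hi
  · exact zero_mem _

theorem mulA_X_X (k : Type*) [Field k] (a b : ℕ) : mulA k (X k a) (X k b) = X k (a + b + 1) := by
  simp [mulA, X, muBasis]

theorem hMap_X (k : Type*) [Field k] (n a : ℕ) :
    hMap k n (X k a) = if n ≤ a + 1 then Y k (a + 1 - n) else 0 := by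
  simp [hMap, X, hBasis]

theorem stmt_6_general (k : Type) [Field k] (n : ℕ) :
    (∀ a b : ℕ,
      hMap k n (mulA k (X k a) (X k b)) =
        if n ≤ a + b + 2 then Y k (a + b + 2 - n) else 0) ∧
    (∀ u w : A k, pMap k n (mulA k u (hMap k n w)) = 0) ∧
    (∀ u w : A k, hMap k n (mulA k u (hMap k n w)) = 0) ∧
    (∀ c a : ℕ, pMap k n (mulA k (X k c) (Y k a)) = 0) ∧
    (∀ c a : ℕ, hMap k n (mulA k (X k c) (Y k a)) = 0) := by
  have mul_h w u := mulA_mem_degreeOne k u (hMap_mem_degreeOne k n w)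
  have mul_Y a u := mulA_mem_degreeOne k u (Y_mem_degreeOne k a)
  refine ⟨fun a b => ?_,
    fun u w => pMap_eq_zero_of_mem_degreeOne k n (mul_h w u),
    fun u w => hMap_eq_zero_of_mem_degreeOne k n (mul_h w u),
    fun c a => pMap_eq_zero_of_mem_degreeOne k n (mul_Y a _),
    fun c a => hMap_eq_zero_of_mem_degreeOne k n (mul_Y a _)⟩
  rw [mulA_X_X, hMap_X]

/-- Concretely, `h(x^a · x^b) = x^(a+b−n) y` if `a + b ≥ n` and `0`
otherwise (encoded with `X k a = x^(a+1)`); moreover multiplying any element of `Aⁿ`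
with an element in the image of `h` and then applying `p` or `h` yields `0`; in
particular `p(x^c · x^(a+b−n) y) = 0` and `h(x^c · x^(a+b−n) y) = 0`.
(Hence all transferred `A_∞`-operations `m_k`, `k ≥ 3`, vanish and `Aⁿ` is formal.) -/
theorem stmt_6 (k : Type) [Field k] [CharZero k] (n : ℕ) (hn : 1 ≤ n) :
    (∀ a b : ℕ,
      hMap k n (mulA k (X k a) (X k b)) =
        if n ≤ a + b + 2 then Y k (a + b + 2 - n) else 0) ∧
    (∀ u w : A k, pMap k n (mulA k u (hMap k n w)) = 0) ∧
    (∀ u w : A k, hMap k n (mulA k u (hMap k n w)) = 0) ∧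
    (∀ c a : ℕ, pMap k n (mulA k (X k c) (Y k a)) = 0) ∧
    (∀ c a : ℕ, hMap k n (mulA k (X k c) (Y k a)) = 0) :=
  stmt_6_general k n

end
end
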